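/- arXiv:2105.14737 — 3 statements merged into one kernel-verified Lean document; each statement's English description precedes it below -/
import Mathlib

section
/- Let A ∈ R^{F×F} be symmetric positive definite and let U_k ∈ R^{F×k} consist of the eigenvectors of A corresponding to its k smallest eigenvalues. Then U_k minimizes W ↦ ‖A⁻¹ − W (Wᵀ A W)⁻¹ Wᵀ‖_F over all W ∈ R^{F×k} for which Wᵀ A W is invertible. -/
open Matrix

/-- squared Frobenius norm -/
noncomputable def frobSq {m n : Type*} [Fintype m] [Fintype n]
    (A : Matrix m n ℝ) : ℝ := ∑ i, ∑ j, (A i j) ^ 2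

/-- Frobenius norm -/
noncomputable def frob {m n : Type*} [Fintype m] [Fintype n]
    (A : Matrix m n ℝ) : ℝ := Real.sqrt (frobSq A)

namespace StmtAux

lemma frobSq_nonneg {m n : Type*} [Fintype m] [Fintype n] (A : Matrix m n ℝ) : 0 ≤ frobSq A :=
  Finset.sum_nonneg fun _ _ => Finset.sum_nonneg fun _ _ => sq_nonneg _

lemma frobSq_eq_trace {n : Type*} [Fintype n] (A : Matrix n n ℝ) :
    frobSq A = (Aᵀ * A).trace := by
  rw [frobSq, Matrix.trace, Finset.sum_comm]
  simp [Matrix.diag, Matrix.mul_apply, sq]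

lemma frobSq_conj {n : Type*} [Fintype n] [DecidableEq n] (U M : Matrix n n ℝ)
    (hU' : Uᵀ * U = 1) : frobSq (U * M * Uᵀ) = frobSq M := by
  rw [frobSq_eq_trace, frobSq_eq_trace]
  have h1 : (U * M * Uᵀ)ᵀ * (U * M * Uᵀ) = U * (Mᵀ * (M * Uᵀ)) := by
    simp only [Matrix.transpose_mul, Matrix.transpose_transpose, Matrix.mul_assoc]
    rw [← Matrix.mul_assoc Uᵀ U, hU', Matrix.one_mul]
  rw [h1, Matrix.trace_mul_comm, Matrix.mul_assoc, Matrix.mul_assoc, hU', Matrix.mul_one]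

lemma frobSq_diagonal {n : Type*} [Fintype n] [DecidableEq n] (v : n → ℝ) :
    frobSq (Matrix.diagonal v) = ∑ i, v i ^ 2 := by
  rw [frobSq]
  refine Finset.sum_congr rfl fun i _ => ?_
  rw [Finset.sum_eq_single i (fun j _ hij => by simp [Matrix.diagonal_apply_ne' v hij]) (by simp)]
  simp


lemma exists_iso {F m : ℕ} (Q : Matrix (Fin F) (Fin F) ℝ)
    (hQt : Qᵀ = Q) (hQ2 : Q * Q = Q) (htr : Q.trace = (m : ℝ)) :
    ∃ X : Matrix (Fin F) (Fin m) ℝ, Xᵀ * X = 1 ∧ X * Xᵀ = Q := by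
  have hH : Q.IsHermitian := by
    rw [Matrix.IsHermitian, Matrix.conjTranspose_eq_transpose_of_trivial]; exact hQt
  set S : Matrix (Fin F) (Fin F) ℝ := (hH.eigenvectorUnitary : Matrix (Fin F) (Fin F) ℝ) with hSdef
  set q : Fin F → ℝ := hH.eigenvalues with hqdef
  have hS2 : S * Sᵀ = 1 := by
    have := (Matrix.mem_unitaryGroup_iff).mp hH.eigenvectorUnitary.2
    rwa [Matrix.star_eq_conjTranspose, Matrix.conjTranspose_eq_transpose_of_trivial] at this
  have hS1 : Sᵀ * S = 1 := mul_eq_one_comm.mp hS2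
  have hspec : Q = S * Matrix.diagonal q * Sᵀ := by
    have := hH.spectral_theorem
    rwa [Unitary.conjStarAlgAut_apply, Matrix.star_eq_conjTranspose, Matrix.conjTranspose_eq_transpose_of_trivial,
      show (RCLike.ofReal ∘ hH.eigenvalues : Fin F → ℝ) = q from rfl] at this
  -- eigenvalues are 0 or 1
  have hq01 : ∀ i, q i = 0 ∨ q i = 1 := by
    have h1 : S * Matrix.diagonal q * Sᵀ * (S * Matrix.diagonal q * Sᵀ)
        = S * Matrix.diagonal q * Sᵀ := by rw [← hspec]; exact hQ2
    have h2 : Matrix.diagonal q * Matrix.diagonal q = Matrix.diagonal q := by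
      have h3 : Sᵀ * (S * Matrix.diagonal q * Sᵀ * (S * Matrix.diagonal q * Sᵀ)) * S
          = Sᵀ * (S * Matrix.diagonal q * Sᵀ) * S := by rw [h1]
      calc Matrix.diagonal q * Matrix.diagonal q
          = (Sᵀ * S) * Matrix.diagonal q * ((Sᵀ * S) * Matrix.diagonal q * (Sᵀ * S)) := by
            rw [hS1]; simp [Matrix.mul_assoc]
        _ = Sᵀ * (S * Matrix.diagonal q * Sᵀ * (S * Matrix.diagonal q * Sᵀ)) * S := by
            simp only [Matrix.mul_assoc]
        _ = Sᵀ * (S * Matrix.diagonal q * Sᵀ) * S := h3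
        _ = (Sᵀ * S) * Matrix.diagonal q * (Sᵀ * S) := by simp only [Matrix.mul_assoc]
        _ = Matrix.diagonal q := by rw [hS1]; simp
    intro i
    have := congrArg (fun M => M i i) h2
    simp only [Matrix.diagonal_mul_diagonal, Matrix.diagonal_apply_eq] at this
    rcases mul_eq_zero.mp (show q i * (q i - 1) = 0 by ring_nf; linarith [this]) with h | h
    · exact Or.inl h
    · exact Or.inr (by linarith [sub_eq_zero.mp h])
  -- the eigenvalue-one set has cardinality m
  classical
  set s : Finset (Fin F) := Finset.univ.filter (fun i => q i = 1) with hs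
  have htrq : Q.trace = ∑ i, q i := by
    rw [hspec, Matrix.trace_mul_comm, ← Matrix.mul_assoc, hS1, Matrix.one_mul]
    simp [Matrix.trace, Matrix.diag]
  have hsum : ∑ i, q i = (s.card : ℝ) := by
    rw [← Finset.sum_filter_add_sum_filter_not Finset.univ (fun i => q i = 1)]
    have h1 : ∑ i ∈ Finset.univ.filter (fun i => q i = 1), q i = (s.card : ℝ) := by
      rw [Finset.sum_congr rfl (fun i hi => (Finset.mem_filter.mp hi).2)]
      simp [hs]
    have h2 : ∑ i ∈ Finset.univ.filter (fun i => ¬ q i = 1), q i = 0 := by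
      refine Finset.sum_eq_zero fun i hi => ?_
      rcases hq01 i with h | h
      · exact h
      · exact absurd h (Finset.mem_filter.mp hi).2
    rw [h1, h2, add_zero]
  have hcard : s.card = m := by
    have : (s.card : ℝ) = (m : ℝ) := by rw [← hsum, ← htrq, htr]
    exact_mod_cast this
  -- bijection g : Fin m → s
  have hcard' : Fintype.card { x // x ∈ s } = m := by simp [hcard]
  set eqv : { x // x ∈ s } ≃ Fin m := Fintype.equivFinOfCardEq hcard' with heqv
  set g : Fin m → Fin F := fun p => (eqv.symm p : Fin F) with hg
  have hginj : Function.Injective g := by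
    intro p p' h
    have := Subtype.ext h
    exact eqv.symm.injective (by exact this)
  have hgq : ∀ p, q (g p) = 1 := fun p => (Finset.mem_filter.mp (eqv.symm p).2).2
  have hgsurj : ∀ i ∈ s, ∃ p, g p = i := fun i hi => ⟨eqv ⟨i, hi⟩, by simp [hg]⟩
  refine ⟨S.submatrix id g, ?_, ?_⟩
  · ext p p'
    have h1 := congrArg (fun M => M (g p) (g p')) hS1
    simp only [Matrix.mul_apply, Matrix.transpose_apply, Matrix.one_apply] at h1 ⊢
    simp only [Matrix.submatrix_apply, id_eq]
    rw [h1]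
    by_cases h : p = p'
    · simp [h]
    · rw [if_neg (fun hc => h (hginj hc)), if_neg h]
  · ext a b
    have hQab : Q a b = ∑ i, S a i * q i * S b i := by
      rw [hspec, Matrix.mul_apply]
      exact Finset.sum_congr rfl fun i _ => by
        rw [Matrix.mul_diagonal, Matrix.transpose_apply]
    rw [Matrix.mul_apply, hQab]
    simp only [Matrix.transpose_apply, Matrix.submatrix_apply, id_eq]
    have hleft : ∑ i, S a i * q i * S b i = ∑ i ∈ s, S a i * S b i := by
      rw [← Finset.sum_filter_add_sum_filter_not Finset.univ (fun i => q i = 1)]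
      have h2 : ∑ i ∈ Finset.univ.filter (fun i => ¬ q i = 1), S a i * q i * S b i = 0 := by
        refine Finset.sum_eq_zero fun i hi => ?_
        rcases hq01 i with h | h
        · rw [h]; ring
        · exact absurd h (Finset.mem_filter.mp hi).2
      rw [h2, add_zero]
      exact Finset.sum_congr rfl fun i hi => by
        rw [(Finset.mem_filter.mp hi).2]; ring
    have hright : ∑ i ∈ s, S a i * S b i = ∑ p : Fin m, S a (g p) * S b (g p) := by
      refine (Finset.sum_bij (fun p _ => g p) (fun p _ => ?_) (fun p _ p' _ h => hginj h)
        (fun i hi => ?_) (fun p _ => rfl)).symm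
      · exact (eqv.symm p).2
      · obtain ⟨p, hp⟩ := hgsurj i hi
        exact ⟨p, Finset.mem_univ p, hp⟩
    rw [hleft, hright]

lemma core {F m : ℕ} (hm : m ≤ F) (b : Fin F → ℝ) (hb : Monotone b) (hb0 : ∀ i, 0 ≤ b i)
    (X : Matrix (Fin F) (Fin m) ℝ) (hX : Xᵀ * X = 1) :
    ∑ j : Fin m, b (Fin.castLE hm j) ^ 2 ≤ frobSq (Xᵀ * Matrix.diagonal b * X) := by
  classical
  set G : Matrix (Fin m) (Fin m) ℝ := Xᵀ * Matrix.diagonal b * X with hGdef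
  have hGt : Gᵀ = G := by
    rw [hGdef]
    simp only [Matrix.transpose_mul, Matrix.transpose_transpose, Matrix.diagonal_transpose]
    rw [Matrix.mul_assoc]
  have hH : G.IsHermitian := by
    rw [Matrix.IsHermitian, Matrix.conjTranspose_eq_transpose_of_trivial]; exact hGt
  set S : Matrix (Fin m) (Fin m) ℝ := (hH.eigenvectorUnitary : Matrix (Fin m) (Fin m) ℝ)
    with hSdef
  set μ : Fin m → ℝ := hH.eigenvalues with hμdef
  have hS2 : S * Sᵀ = 1 := by
    have := (Matrix.mem_unitaryGroup_iff).mp hH.eigenvectorUnitary.2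
    rwa [Matrix.star_eq_conjTranspose, Matrix.conjTranspose_eq_transpose_of_trivial] at this
  have hS1 : Sᵀ * S = 1 := mul_eq_one_comm.mp hS2
  have hspec : G = S * Matrix.diagonal μ * Sᵀ := by
    have := hH.spectral_theorem
    rwa [Unitary.conjStarAlgAut_apply, Matrix.star_eq_conjTranspose, Matrix.conjTranspose_eq_transpose_of_trivial,
      show (RCLike.ofReal ∘ hH.eigenvalues : Fin m → ℝ) = μ from rfl] at this
  set σ : Equiv.Perm (Fin m) := Tuple.sort μ with hσdef
  have hmono : Monotone (μ ∘ σ) := Tuple.monotone_sort μ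
  set S' : Matrix (Fin m) (Fin m) ℝ := S.submatrix id σ with hS'def
  have hS'1 : S'ᵀ * S' = 1 := by
    ext p r
    have h1 := congrArg (fun M => M (σ p) (σ r)) hS1
    simp only [Matrix.mul_apply, Matrix.transpose_apply, Matrix.one_apply] at h1 ⊢
    simp only [hS'def, Matrix.submatrix_apply, id_eq]
    rw [h1]
    by_cases h : p = r
    · simp [h]
    · rw [if_neg (fun hc => h (σ.injective hc)), if_neg h]
  have hS'2 : S' * S'ᵀ = 1 := mul_eq_one_comm.mp hS'1
  have hspec' : G = S' * Matrix.diagonal (μ ∘ σ) * S'ᵀ := by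
    rw [hspec]
    ext a c
    rw [Matrix.mul_apply, Matrix.mul_apply]
    have h1 : ∀ i, (S * Matrix.diagonal μ) a i * Sᵀ i c = S a i * μ i * S c i := fun i => by
      rw [Matrix.mul_diagonal, Matrix.transpose_apply]
    have h2 : ∀ p, (S' * Matrix.diagonal (μ ∘ σ)) a p * S'ᵀ p c
        = S a (σ p) * μ (σ p) * S c (σ p) := fun p => by
      rw [Matrix.mul_diagonal, Matrix.transpose_apply]
      simp [hS'def]
    rw [Finset.sum_congr rfl fun i _ => h1 i, Finset.sum_congr rfl fun p _ => h2 p]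
    exact (Equiv.sum_comp σ (fun i => S a i * μ i * S c i)).symm
  -- frobenius norm of G
  have hfro : frobSq G = ∑ p, (μ ∘ σ) p ^ 2 := by
    rw [hspec', frobSq_conj S' _ hS'1, frobSq_diagonal]
  -- Z has orthonormal columns and diagonalizes b-form
  set Z : Matrix (Fin F) (Fin m) ℝ := X * S' with hZdef
  have hZ1 : Zᵀ * Z = 1 := by
    rw [hZdef, Matrix.transpose_mul, Matrix.mul_assoc, ← Matrix.mul_assoc Xᵀ X S', hX,
      Matrix.one_mul, hS'1]
  have hZBZ : Zᵀ * Matrix.diagonal b * Z = Matrix.diagonal (μ ∘ σ) := by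
    rw [hZdef, Matrix.transpose_mul]
    calc S'ᵀ * Xᵀ * Matrix.diagonal b * (X * S')
        = S'ᵀ * (Xᵀ * Matrix.diagonal b * X) * S' := by simp only [Matrix.mul_assoc]
      _ = S'ᵀ * (S' * Matrix.diagonal (μ ∘ σ) * S'ᵀ) * S' := by rw [← hGdef, hspec']
      _ = (S'ᵀ * S') * Matrix.diagonal (μ ∘ σ) * (S'ᵀ * S') := by simp only [Matrix.mul_assoc]
      _ = Matrix.diagonal (μ ∘ σ) := by rw [hS'1]; simp
  -- the key eigenvalue bound
  have key : ∀ j : Fin m, b (Fin.castLE hm j) ≤ (μ ∘ σ) j := by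
    intro j
    have hj1 : (j : ℕ) + 1 ≤ m := j.2
    have hjF : (j : ℕ) ≤ F := le_trans (le_of_lt j.2) hm
    set em : Fin ((j : ℕ)+1) → Fin m := Fin.castLE hj1 with hem
    let φ : (Fin ((j : ℕ)+1) → ℝ) →ₗ[ℝ] (Fin (j : ℕ) → ℝ) :=
      { toFun := fun c => fun i => ∑ p, c p * Z (Fin.castLE hjF i) (em p)
        map_add' := by
          intro c1 c2; funext i
          simp [add_mul, Finset.sum_add_distrib]
        map_smul' := by
          intro r c; funext i
          simp [Finset.mul_sum, mul_assoc] }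
    have hker : LinearMap.ker φ ≠ ⊥ := by
      apply LinearMap.ker_ne_bot_of_finrank_lt (K := ℝ)
      rw [Module.finrank_fin_fun, Module.finrank_fin_fun]
      omega
    obtain ⟨c, hc0, hcne⟩ := (Submodule.ne_bot_iff _).mp hker
    have hφc : ∀ i : Fin (j : ℕ), ∑ p, c p * Z (Fin.castLE hjF i) (em p) = 0 := by
      intro i
      exact congrFun (LinearMap.mem_ker.mp hc0) i
    set u : Fin F → ℝ := fun a => ∑ p, c p * Z a (em p) with hu
    have hu0 : ∀ a : Fin F, (a : ℕ) < (j : ℕ) → u a = 0 := by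
      intro a ha
      have h1 := hφc ⟨(a : ℕ), ha⟩
      have h2 : Fin.castLE hjF ⟨(a : ℕ), ha⟩ = a := by
        apply Fin.ext; rfl
      rwa [h2] at h1
    have hentry : ∀ (w : Fin F → ℝ) (p r : Fin ((j : ℕ)+1)),
        (Zᵀ * Matrix.diagonal w * Z) (em p) (em r) = ∑ a, Z a (em p) * (w a * Z a (em r)) := by
      intro w p r
      rw [Matrix.mul_assoc, Matrix.mul_apply]
      exact Finset.sum_congr rfl fun a _ => by
        rw [Matrix.transpose_apply, Matrix.diagonal_mul]
    have hexp : ∀ w : Fin F → ℝ, ∑ a, w a * u a ^ 2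
        = ∑ p, ∑ r, (c p * c r) * (Zᵀ * Matrix.diagonal w * Z) (em p) (em r) := by
      intro w
      have h1 : ∀ a, w a * u a ^ 2
          = ∑ p, ∑ r, (c p * c r) * (Z a (em p) * (w a * Z a (em r))) := by
        intro a
        calc w a * u a ^ 2
            = ∑ p, ∑ r, w a * ((c p * Z a (em p)) * (c r * Z a (em r))) := by
              rw [sq, hu, Finset.sum_mul_sum, Finset.mul_sum]
              exact Finset.sum_congr rfl fun p _ => by rw [Finset.mul_sum]
          _ = ∑ p, ∑ r, (c p * c r) * (Z a (em p) * (w a * Z a (em r))) :=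
              Finset.sum_congr rfl fun p _ => Finset.sum_congr rfl fun r _ => by ring
      rw [Finset.sum_congr rfl fun a _ => h1 a, Finset.sum_comm]
      refine Finset.sum_congr rfl fun p _ => ?_
      rw [Finset.sum_comm]
      refine Finset.sum_congr rfl fun r _ => ?_
      rw [hentry w p r, Finset.mul_sum]
    have heminj : Function.Injective em := Fin.castLE_injective hj1
    have hnorm : ∑ a, u a ^ 2 = ∑ p, c p ^ 2 := by
      have hone : Matrix.diagonal (fun _ : Fin F => (1 : ℝ)) = 1 := Matrix.diagonal_one
      have h1 := hexp (fun _ => 1)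
      simp only [one_mul] at h1
      rw [hone, Matrix.mul_one, hZ1] at h1
      rw [h1]
      have h3 : ∀ p r, ((1 : Matrix (Fin m) (Fin m) ℝ)) (em p) (em r)
          = if p = r then (1:ℝ) else 0 := by
        intro p r
        rw [Matrix.one_apply]
        by_cases h : p = r
        · simp [h]
        · rw [if_neg (fun hc => h (heminj hc)), if_neg h]
      refine Finset.sum_congr rfl fun p _ => ?_
      rw [Finset.sum_congr rfl fun r _ => by rw [h3 p r]]
      simp [Finset.mul_sum, sq]
    have hupper : ∑ a, b a * u a ^ 2 ≤ (μ ∘ σ) j * ∑ p, c p ^ 2 := by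
      rw [hexp b, hZBZ]
      have h3 : ∀ p r, (Matrix.diagonal (μ ∘ σ)) (em p) (em r)
          = if p = r then (μ ∘ σ) (em p) else 0 := by
        intro p r
        by_cases h : p = r
        · simp [h, Matrix.diagonal_apply_eq]
        · rw [Matrix.diagonal_apply_ne _ (fun hc => h (heminj hc)), if_neg h]
      calc ∑ p, ∑ r, (c p * c r) * (Matrix.diagonal (μ ∘ σ)) (em p) (em r)
          = ∑ p, c p ^ 2 * (μ ∘ σ) (em p) := by
            refine Finset.sum_congr rfl fun p _ => ?_
            rw [Finset.sum_congr rfl fun r _ => by rw [h3 p r]]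
            simp [sq, mul_ite]
        _ ≤ ∑ p, c p ^ 2 * (μ ∘ σ) j := by
            refine Finset.sum_le_sum fun p _ => ?_
            refine mul_le_mul_of_nonneg_left ?_ (sq_nonneg _)
            refine hmono ?_
            rw [Fin.le_def]
            exact Nat.lt_succ_iff.mp p.2
        _ = (μ ∘ σ) j * ∑ p, c p ^ 2 := by rw [← Finset.sum_mul, mul_comm]
    have hlower : b (Fin.castLE hm j) * ∑ p, c p ^ 2 ≤ ∑ a, b a * u a ^ 2 := by
      rw [← hnorm, Finset.mul_sum]
      refine Finset.sum_le_sum fun a _ => ?_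
      by_cases ha : (a : ℕ) < (j : ℕ)
      · rw [hu0 a ha]; simp
      · refine mul_le_mul_of_nonneg_right (hb ?_) (sq_nonneg _)
        rw [Fin.le_def]
        exact le_of_not_gt ha
    have hnc : 0 < ∑ p, c p ^ 2 := by
      have hex : ∃ p, c p ≠ 0 := by
        by_contra h
        push_neg at h
        exact hcne (funext h)
      obtain ⟨p, hp⟩ := hex
      refine Finset.sum_pos' (fun _ _ => sq_nonneg _) ⟨p, Finset.mem_univ p, ?_⟩
      positivity
    exact le_of_mul_le_mul_right (le_trans hlower hupper) hnc
  calc ∑ j : Fin m, b (Fin.castLE hm j) ^ 2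
      ≤ ∑ j : Fin m, (μ ∘ σ) j ^ 2 :=
        Finset.sum_le_sum fun j _ => pow_le_pow_left₀ (hb0 _) (key j) 2
    _ = frobSq G := hfro.symm

end StmtAux

theorem stmt2 {F k : ℕ} (hk : k ≤ F)
    (A U : Matrix (Fin F) (Fin F) ℝ) (d : Fin F → ℝ)
    (hA : A.PosDef) (hU : U * Uᵀ = 1) (hU' : Uᵀ * U = 1)
    (hd : ∀ i, 0 < d i) (hdesc : Antitone d)
    (hdecomp : A = U * Matrix.diagonal d * Uᵀ)
    (e : Fin k → Fin F) (he : ∀ j : Fin k, (e j : ℕ) = F - k + j)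
    (Uk : Matrix (Fin F) (Fin k) ℝ) (hUk : Uk = U.submatrix id e) :
    ∀ W : Matrix (Fin F) (Fin k) ℝ, IsUnit (Wᵀ * A * W) →
      frob (A⁻¹ - Uk * (Ukᵀ * A * Uk)⁻¹ * Ukᵀ)
        ≤ frob (A⁻¹ - W * (Wᵀ * A * W)⁻¹ * Wᵀ) := by
  intro W hW
  classical
  have hm : F - k ≤ F := Nat.sub_le F k
  set b : Fin F → ℝ := fun i => (d i)⁻¹ with hb
  have hb0 : ∀ i, 0 ≤ b i := fun i => le_of_lt (inv_pos.mpr (hd i))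
  have hbmono : Monotone b := by
    intro i j hij
    have h1 : d j ≤ d i := hdesc hij
    exact inv_anti₀ (hd j) h1
  have hAt : Aᵀ = A := by
    rw [hdecomp]
    simp only [Matrix.transpose_mul, Matrix.transpose_transpose, Matrix.diagonal_transpose]
    rw [Matrix.mul_assoc]
  have sand : ∀ M N : Matrix (Fin F) (Fin F) ℝ,
      (U * M * Uᵀ) * (U * N * Uᵀ) = U * (M * N) * Uᵀ := by
    intro M N
    simp only [Matrix.mul_assoc]
    rw [← Matrix.mul_assoc Uᵀ U (N * Uᵀ), hU', Matrix.one_mul]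
  have hdb1 : Matrix.diagonal (fun i => d i * b i) = (1 : Matrix (Fin F) (Fin F) ℝ) := by
    have h1 : (fun i => d i * b i) = fun _ : Fin F => (1 : ℝ) :=
      funext fun i => mul_inv_cancel₀ (ne_of_gt (hd i))
    rw [h1]
    exact Matrix.diagonal_one
  have hAinv : A⁻¹ = U * Matrix.diagonal b * Uᵀ := by
    apply Matrix.inv_eq_right_inv
    rw [hdecomp, sand, Matrix.diagonal_mul_diagonal, hdb1, Matrix.mul_one, hU]
  -- ###### LHS value ######
  have einj : Function.Injective e := by
    intro p q h
    have h1 := congrArg Fin.val h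
    rw [he p, he q] at h1
    exact Fin.ext (by omega)
  set Pe : Matrix (Fin F) (Fin k) ℝ := fun i p => if i = e p then 1 else 0 with hPedef
  have hUkPe : Uk = U * Pe := by
    rw [hUk]
    ext a p
    rw [Matrix.mul_apply, Matrix.submatrix_apply]
    simp only [hPedef, mul_ite, mul_one, mul_zero]
    rw [Finset.sum_ite_eq' Finset.univ (e p) (fun i => U a i)]
    simp
  have hPee : ∀ v : Fin F → ℝ,
      Peᵀ * Matrix.diagonal v * Pe = Matrix.diagonal (fun p => v (e p)) := by
    intro v
    ext p q
    rw [Matrix.mul_assoc, Matrix.mul_apply]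
    simp only [Matrix.transpose_apply, Matrix.diagonal_mul]
    simp only [hPedef]
    rw [Finset.sum_eq_single (e p)]
    · rw [if_pos rfl, one_mul]
      by_cases h : p = q
      · subst h; simp
      · rw [Matrix.diagonal_apply_ne _ h, if_neg (fun hc : e p = e q => h (einj hc))]
        ring
    · intro i _ hi
      rw [if_neg (fun hc : i = e p => hi hc)]
      ring
    · intro habs
      exact absurd (Finset.mem_univ (e p)) habs
  have hUkAUk : Ukᵀ * A * Uk = Matrix.diagonal (fun p => d (e p)) := by
    rw [hUkPe, hdecomp]
    calc (U * Pe)ᵀ * (U * Matrix.diagonal d * Uᵀ) * (U * Pe)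
        = Peᵀ * ((Uᵀ * U) * (Matrix.diagonal d * ((Uᵀ * U) * Pe))) := by
          simp only [Matrix.transpose_mul, Matrix.mul_assoc]
      _ = Peᵀ * Matrix.diagonal d * Pe := by
          rw [hU']
          simp only [Matrix.one_mul, Matrix.mul_assoc]
      _ = Matrix.diagonal (fun p => d (e p)) := hPee d
  have hinvdiag : (Matrix.diagonal (fun p => d (e p)))⁻¹
      = Matrix.diagonal (fun p => b (e p)) := by
    apply Matrix.inv_eq_right_inv
    rw [Matrix.diagonal_mul_diagonal]
    have h1 : (fun p : Fin k => d (e p) * b (e p)) = fun _ : Fin k => (1 : ℝ) :=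
      funext fun p => mul_inv_cancel₀ (ne_of_gt (hd (e p)))
    rw [h1]
    exact Matrix.diagonal_one
  set g : Fin F → ℝ := fun i => if (i : ℕ) < F - k then 0 else b i with hgdef
  set h : Fin F → ℝ := fun i => if (i : ℕ) < F - k then b i else 0 with hhdef
  have hmid : Pe * Matrix.diagonal (fun p => b (e p)) * Peᵀ = Matrix.diagonal g := by
    ext a a'
    rw [Matrix.mul_assoc, Matrix.mul_apply]
    simp only [Matrix.diagonal_mul, Matrix.transpose_apply]
    simp only [hPedef]
    by_cases ha : (a : ℕ) < F - k
    · rw [Finset.sum_eq_zero, Matrix.diagonal_apply]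
      · rw [hgdef]
        by_cases h1 : a = a'
        · subst h1; simp [ha]
        · simp [h1]
      · intro p _
        have h2 : a ≠ e p := by
          intro hc
          have := he p
          rw [← hc] at this
          omega
        rw [if_neg h2]
        ring
    · have hp0lt : ((a : ℕ) - (F - k)) < k := by
        have := a.2
        omega
      set p₀ : Fin k := ⟨(a : ℕ) - (F - k), hp0lt⟩ with hp₀
      have hep0 : e p₀ = a := by
        apply Fin.ext
        rw [he p₀]
        simp only [hp₀]
        omega
      rw [Finset.sum_eq_single p₀]
      · rw [hep0, if_pos rfl, one_mul, Matrix.diagonal_apply]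
        rw [hgdef]
        by_cases h1 : a = a'
        · subst h1; simp [ha]
        · rw [if_neg h1, if_neg (fun hc : a' = a => h1 hc.symm)]
          ring
      · intro p _ hp
        have h2 : a ≠ e p := by
          intro hc
          exact hp (einj (by rw [hep0, ← hc]))
        rw [if_neg h2]
        ring
      · intro habs
        exact absurd (Finset.mem_univ p₀) habs
  have hLHSmat : A⁻¹ - Uk * (Ukᵀ * A * Uk)⁻¹ * Ukᵀ = U * Matrix.diagonal h * Uᵀ := by
    rw [hUkAUk, hinvdiag, hUkPe, hAinv]
    have h1 : U * Pe * Matrix.diagonal (fun p => b (e p)) * (U * Pe)ᵀ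
        = U * Matrix.diagonal g * Uᵀ := by
      calc U * Pe * Matrix.diagonal (fun p => b (e p)) * (U * Pe)ᵀ
          = U * (Pe * Matrix.diagonal (fun p => b (e p)) * Peᵀ) * Uᵀ := by
            rw [Matrix.transpose_mul]
            simp only [Matrix.mul_assoc]
        _ = U * Matrix.diagonal g * Uᵀ := by rw [hmid]
    rw [h1]
    have h2 : Matrix.diagonal b - Matrix.diagonal g = Matrix.diagonal h := by
      ext i j
      simp only [Matrix.sub_apply, Matrix.diagonal_apply, hgdef, hhdef]
      by_cases h3 : i = j
      · subst h3
        by_cases h4 : (i : ℕ) < F - k <;> simp [h4]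
      · simp [h3]
    rw [← h2, Matrix.mul_sub, Matrix.sub_mul]
  have hLHSval : frobSq (A⁻¹ - Uk * (Ukᵀ * A * Uk)⁻¹ * Ukᵀ)
      = ∑ j : Fin (F - k), b (Fin.castLE hm j) ^ 2 := by
    rw [hLHSmat, StmtAux.frobSq_conj U _ hU', StmtAux.frobSq_diagonal]
    have h1 : ∀ i : Fin F, h i ^ 2 = if (i : ℕ) < F - k then b i ^ 2 else 0 := by
      intro i
      rw [hhdef]
      by_cases h3 : (i : ℕ) < F - k <;> simp [h3]
    rw [Finset.sum_congr rfl fun i _ => h1 i, ← Finset.sum_filter]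
    refine (Finset.sum_bij (fun (j : Fin (F - k)) (_ : j ∈ Finset.univ) => Fin.castLE hm j)
      ?_ ?_ ?_ ?_).symm
    · intro j _
      refine Finset.mem_filter.mpr ⟨Finset.mem_univ _, ?_⟩
      exact j.2
    · intro j _ j' _ hj
      exact Fin.castLE_injective hm hj
    · intro i hi
      have h4 := (Finset.mem_filter.mp hi).2
      exact ⟨⟨(i : ℕ), h4⟩, Finset.mem_univ _, Fin.ext rfl⟩
    · intro j _
      rfl
  -- ###### RHS value ######
  set G : Matrix (Fin k) (Fin k) ℝ := Wᵀ * A * W with hGdef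
  clear_value G
  have hdet : IsUnit G.det := (Matrix.isUnit_iff_isUnit_det G).mp hW
  have hGi1 : G⁻¹ * G = 1 := Matrix.nonsing_inv_mul G hdet
  have hGi2 : G * G⁻¹ = 1 := Matrix.mul_nonsing_inv G hdet
  have hGt : Gᵀ = G := by
    rw [hGdef]
    simp only [Matrix.transpose_mul, Matrix.transpose_transpose]
    rw [hAt, ← Matrix.mul_assoc]
  have hGit : (G⁻¹)ᵀ = G⁻¹ := by rw [Matrix.transpose_nonsing_inv, hGt]
  set sd : Fin F → ℝ := fun i => Real.sqrt (d i) with hsddef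
  have hsd2 : ∀ i, sd i * sd i = d i := fun i => Real.mul_self_sqrt (le_of_lt (hd i))
  have hsdne : ∀ i, sd i ≠ 0 := fun i => ne_of_gt (Real.sqrt_pos.mpr (hd i))
  set V₁ : Matrix (Fin F) (Fin k) ℝ := Matrix.diagonal sd * (Uᵀ * W) with hV₁def
  clear_value V₁
  have hV₁ : V₁ᵀ * V₁ = G := by
    rw [hV₁def, hGdef, hdecomp]
    simp only [Matrix.transpose_mul, Matrix.diagonal_transpose, Matrix.transpose_transpose,
      Matrix.mul_assoc]
    rw [← Matrix.mul_assoc (Matrix.diagonal sd) (Matrix.diagonal sd) (Uᵀ * W),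
      Matrix.diagonal_mul_diagonal]
    rw [show (fun i : Fin F => sd i * sd i) = d from funext hsd2]
  set M₁ : Matrix (Fin F) (Fin F) ℝ := V₁ * G⁻¹ * V₁ᵀ with hM₁def
  clear_value M₁
  have hM₁ : M₁ * M₁ = M₁ := by
    rw [hM₁def]
    calc V₁ * G⁻¹ * V₁ᵀ * (V₁ * G⁻¹ * V₁ᵀ)
        = V₁ * (G⁻¹ * ((V₁ᵀ * V₁) * (G⁻¹ * V₁ᵀ))) := by simp only [Matrix.mul_assoc]
      _ = V₁ * (G⁻¹ * (G * (G⁻¹ * V₁ᵀ))) := by rw [hV₁]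
      _ = V₁ * (G⁻¹ * V₁ᵀ) := by rw [← Matrix.mul_assoc G G⁻¹ V₁ᵀ, hGi2, Matrix.one_mul]
      _ = V₁ * G⁻¹ * V₁ᵀ := by simp only [Matrix.mul_assoc]
  set R : Matrix (Fin F) (Fin F) ℝ := 1 - M₁ with hRdef
  clear_value R
  have hM₁t : M₁ᵀ = M₁ := by
    rw [hM₁def, Matrix.transpose_mul, Matrix.transpose_mul, Matrix.transpose_transpose, hGit,
      ← Matrix.mul_assoc]
  have hRt : Rᵀ = R := by
    rw [hRdef, Matrix.transpose_sub, Matrix.transpose_one, hM₁t]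
  have hR2 : R * R = R := by
    rw [hRdef]
    simp only [Matrix.mul_sub, Matrix.sub_mul, Matrix.mul_one, Matrix.one_mul, hM₁, sub_self,
      sub_zero]
  have htrR : R.trace = ((F - k : ℕ) : ℝ) := by
    rw [hRdef, Matrix.trace_sub, Matrix.trace_one, hM₁def, Matrix.trace_mul_cycle, hV₁, hGi2,
      Matrix.trace_one]
    simp only [Fintype.card_fin]
    rw [Nat.cast_sub hk]
  obtain ⟨X, hX1, hX2⟩ := StmtAux.exists_iso R hRt hR2 htrR
  set rb : Fin F → ℝ := fun i => (sd i)⁻¹ with hrbdef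
  have hrbsd : Matrix.diagonal rb * Matrix.diagonal sd = 1 := by
    rw [Matrix.diagonal_mul_diagonal]
    have h1 : (fun i : Fin F => rb i * sd i) = fun _ : Fin F => (1 : ℝ) :=
      funext fun i => inv_mul_cancel₀ (hsdne i)
    rw [h1]
    exact Matrix.diagonal_one
  have hrb2 : Matrix.diagonal rb * Matrix.diagonal rb = Matrix.diagonal b := by
    rw [Matrix.diagonal_mul_diagonal]
    have h1 : (fun i : Fin F => rb i * rb i) = b := by
      funext i
      rw [hrbdef, hb]
      show (sd i)⁻¹ * (sd i)⁻¹ = (d i)⁻¹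
      rw [← mul_inv, hsd2 i]
    rw [h1]
  have hDV : Matrix.diagonal rb * V₁ = Uᵀ * W := by
    rw [hV₁def, ← Matrix.mul_assoc, hrbsd, Matrix.one_mul]
  have hVD : V₁ᵀ * Matrix.diagonal rb = Wᵀ * U := by
    have h1 := congrArg Matrix.transpose hDV
    rwa [Matrix.transpose_mul, Matrix.diagonal_transpose, Matrix.transpose_mul,
      Matrix.transpose_transpose] at h1
  have hmid2 : Matrix.diagonal rb * M₁ * Matrix.diagonal rb
      = (Uᵀ * W) * G⁻¹ * (Wᵀ * U) := by
    rw [hM₁def]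
    calc Matrix.diagonal rb * (V₁ * G⁻¹ * V₁ᵀ) * Matrix.diagonal rb
        = (Matrix.diagonal rb * V₁) * G⁻¹ * (V₁ᵀ * Matrix.diagonal rb) := by
          simp only [Matrix.mul_assoc]
      _ = (Uᵀ * W) * G⁻¹ * (Wᵀ * U) := by rw [hDV, hVD]
  have hexpand : Matrix.diagonal rb * R * Matrix.diagonal rb
      = Matrix.diagonal b - (Uᵀ * W) * G⁻¹ * (Wᵀ * U) := by
    rw [hRdef, Matrix.mul_sub, Matrix.mul_one, Matrix.sub_mul, hrb2, hmid2]
  have hsec : U * ((Uᵀ * W) * G⁻¹ * (Wᵀ * U)) * Uᵀ = W * G⁻¹ * Wᵀ := by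
    calc U * ((Uᵀ * W) * G⁻¹ * (Wᵀ * U)) * Uᵀ
        = (U * Uᵀ) * (W * (G⁻¹ * (Wᵀ * (U * Uᵀ)))) := by simp only [Matrix.mul_assoc]
      _ = W * G⁻¹ * Wᵀ := by
          rw [hU]
          simp only [Matrix.one_mul, Matrix.mul_one, Matrix.mul_assoc]
  have hRmat : A⁻¹ - W * G⁻¹ * Wᵀ
      = U * (Matrix.diagonal rb * R * Matrix.diagonal rb) * Uᵀ := by
    rw [hexpand, Matrix.mul_sub, Matrix.sub_mul, ← hAinv, hsec]
  have hRHSval : frobSq (A⁻¹ - W * G⁻¹ * Wᵀ) = frobSq (Xᵀ * Matrix.diagonal b * X) := by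
    rw [hRmat, StmtAux.frobSq_conj U _ hU', StmtAux.frobSq_eq_trace, StmtAux.frobSq_eq_trace]
    have ht1 : (Matrix.diagonal rb * R * Matrix.diagonal rb)ᵀ
        = Matrix.diagonal rb * R * Matrix.diagonal rb := by
      simp only [Matrix.transpose_mul, Matrix.diagonal_transpose, hRt]
      rw [Matrix.mul_assoc]
    have ht2 : (Xᵀ * Matrix.diagonal b * X)ᵀ = Xᵀ * Matrix.diagonal b * X := by
      simp only [Matrix.transpose_mul, Matrix.diagonal_transpose, Matrix.transpose_transpose]
      rw [Matrix.mul_assoc]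
    rw [ht1, ht2]
    have hstep1 : (Matrix.diagonal rb * R * Matrix.diagonal rb)
        * (Matrix.diagonal rb * R * Matrix.diagonal rb)
        = Matrix.diagonal rb * (R * Matrix.diagonal b * R * Matrix.diagonal rb) := by
      calc (Matrix.diagonal rb * R * Matrix.diagonal rb)
          * (Matrix.diagonal rb * R * Matrix.diagonal rb)
          = Matrix.diagonal rb * (R * ((Matrix.diagonal rb * Matrix.diagonal rb)
              * (R * Matrix.diagonal rb))) := by simp only [Matrix.mul_assoc]
        _ = Matrix.diagonal rb * (R * (Matrix.diagonal b * (R * Matrix.diagonal rb))) := by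
            rw [hrb2]
        _ = Matrix.diagonal rb * (R * Matrix.diagonal b * R * Matrix.diagonal rb) := by
            simp only [Matrix.mul_assoc]
    rw [hstep1, Matrix.trace_mul_comm]
    have hstep2 : R * Matrix.diagonal b * R * Matrix.diagonal rb * Matrix.diagonal rb
        = R * Matrix.diagonal b * R * Matrix.diagonal b := by
      simp only [Matrix.mul_assoc]
      rw [hrb2]
    rw [hstep2, ← hX2]
    have hstep3 : X * Xᵀ * Matrix.diagonal b * (X * Xᵀ) * Matrix.diagonal b
        = X * (Xᵀ * Matrix.diagonal b * X * (Xᵀ * Matrix.diagonal b)) := by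
      simp only [Matrix.mul_assoc]
    rw [hstep3, Matrix.trace_mul_comm]
    simp only [Matrix.mul_assoc]
  -- ###### conclusion ######
  rw [frob, frob]
  apply Real.sqrt_le_sqrt
  rw [hLHSval, hRHSval]
  exact StmtAux.core hm b hbmono hb0 X hX1
end

section
/- Let C ∈ R^{F×F} be symmetric positive definite with eigendecomposition C = U Σ Uᵀ (descending eigenvalues), let U_{−k} be the eigenvectors of the k largest eigenvalues and Σ_{−k} the diagonal of those eigenvalues, and let W ∈ R^{F×k} have orthonormal columns. Then ‖C⁻¹ − W (Wᵀ C W)⁻¹ Wᵀ‖_F² ≤ ‖C⁻¹ − U_{−k} Σ_{−k}⁻¹ U_{−k}ᵀ‖_F². -/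
open Matrix

lemma frobSq_eq_trace {m n : Type*} [Fintype m] [Fintype n] (A : Matrix m n ℝ) :
    frobSq A = Matrix.trace (Aᵀ * A) := by
  unfold frobSq Matrix.trace
  rw [Finset.sum_comm]
  simp [Matrix.mul_apply, Matrix.diag, sq]

lemma frobSq_nonneg {m n : Type*} [Fintype m] [Fintype n] (A : Matrix m n ℝ) :
    0 ≤ frobSq A := by
  unfold frobSq
  positivity

lemma frobSq_conj {n : Type*} [Fintype n] [DecidableEq n] (U M : Matrix n n ℝ)
    (hU : U * Uᵀ = 1) (hU' : Uᵀ * U = 1) :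
    frobSq (U * M * Uᵀ) = frobSq M := by
  rw [frobSq_eq_trace, frobSq_eq_trace]
  have h : (U * M * Uᵀ)ᵀ * (U * M * Uᵀ) = U * (Mᵀ * M) * Uᵀ := by
    simp only [Matrix.transpose_mul, Matrix.transpose_transpose, Matrix.mul_assoc]
    rw [← Matrix.mul_assoc Uᵀ U, hU', Matrix.one_mul]
  rw [h, Matrix.trace_mul_comm, ← Matrix.mul_assoc, hU', Matrix.one_mul]

lemma proj_diag_nonneg {n : Type*} [Fintype n] (P : Matrix n n ℝ)
    (hP : P * P = P) (hPt : Pᵀ = P) (i : n) : 0 ≤ P i i := by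
  have : P i i = ∑ j, (P i j)^2 := by
    conv_lhs => rw [← hP]
    rw [Matrix.mul_apply]
    refine Finset.sum_congr rfl fun j _ => ?_
    have h := congrFun (congrFun hPt i) j
    rw [Matrix.transpose_apply] at h
    rw [h, sq]
  rw [this]; positivity

lemma proj_diag_le_one {n : Type*} [Fintype n] [DecidableEq n] (P : Matrix n n ℝ)
    (hP : P * P = P) (hPt : Pᵀ = P) (i : n) : P i i ≤ 1 := by
  have h1 : (1 - P) * (1 - P) = 1 - P := by
    rw [Matrix.mul_sub, Matrix.sub_mul, Matrix.sub_mul, hP, Matrix.mul_one,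
      Matrix.one_mul, Matrix.mul_one]
    abel
  have h2 : (1 - P)ᵀ = 1 - P := by
    rw [Matrix.transpose_sub, hPt, Matrix.transpose_one]
  have := proj_diag_nonneg _ h1 h2 i
  simp only [Matrix.sub_apply, Matrix.one_apply_eq] at this
  linarith

lemma sum_ite_lt_card {F k : ℕ} (hk : k ≤ F) :
    ∑ i : Fin F, (if (i : ℕ) < k then (1:ℝ) else 0) = k := by
  rw [Fin.sum_univ_eq_sum_range (fun i => if i < k then (1:ℝ) else 0)]
  have : ∀ i ∈ Finset.range F, (if i < k then (1:ℝ) else 0) = if i ∈ Finset.range k then 1 else 0 := by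
    intro i _; simp [Finset.mem_range]
  rw [Finset.sum_congr rfl this, Finset.sum_ite_mem,
    Finset.inter_eq_right.mpr (Finset.range_subset_range.mpr hk)]
  simp

lemma weighted_sum_ge {F k : ℕ} (hk : k ≤ F) (p e : Fin F → ℝ)
    (hp0 : ∀ i, 0 ≤ p i) (hp1 : ∀ i, p i ≤ 1) (hsum : ∑ i, p i = k)
    (he : Monotone e) :
    ∑ i : Fin F, (if (i : ℕ) < k then e i else 0) ≤ ∑ i, p i * e i := by
  obtain ⟨c, hc1, hc2⟩ : ∃ c : ℝ, (∀ i : Fin F, (i : ℕ) < k → e i ≤ c) ∧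
      (∀ i : Fin F, k ≤ (i : ℕ) → c ≤ e i) := by
    by_cases h : k < F
    · exact ⟨e ⟨k, h⟩, fun i hi => he (by simpa [Fin.le_def] using hi.le),
        fun i hi => he (by simpa [Fin.le_def] using hi)⟩
    · rcases Nat.eq_zero_or_pos F with hF | hF
      · exact ⟨0, fun i _ => absurd i.2 (by omega), fun i _ => absurd i.2 (by omega)⟩
      · exact ⟨e ⟨F - 1, by omega⟩, fun i _ => he (by simp [Fin.le_def]; omega),
          fun i hi => absurd (lt_of_le_of_lt hi i.2) h⟩
  have key : ∀ i : Fin F, (p i - if (i : ℕ) < k then 1 else 0) * c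
      ≤ p i * e i - (if (i : ℕ) < k then e i else 0) := by
    intro i
    by_cases h : (i : ℕ) < k
    · simp only [h, if_pos]
      nlinarith [hc1 i h, hp1 i]
    · simp only [h, if_neg, if_false, sub_zero]
      nlinarith [hc2 i (not_lt.mp h), hp0 i]
  have := Finset.sum_le_sum (fun i (_ : i ∈ Finset.univ) => key i)
  rw [Finset.sum_sub_distrib] at this
  have hz : ∑ i : Fin F, (p i - if (i : ℕ) < k then 1 else 0) * c = 0 := by
    rw [← Finset.sum_mul, Finset.sum_sub_distrib, hsum, sum_ite_lt_card hk]
    ring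
  rw [hz] at this
  linarith

lemma B_posDef {F k : ℕ} (d : Fin F → ℝ) (hd : ∀ i, 0 < d i)
    (V : Matrix (Fin F) (Fin k) ℝ) (hV : Vᵀ * V = 1) :
    (Vᵀ * Matrix.diagonal d * V).PosDef := by
  have hD : (Matrix.diagonal d).PosDef := Matrix.PosDef.diagonal hd
  rw [Matrix.posDef_iff_dotProduct_mulVec]
  constructor
  · have : (Vᵀ * Matrix.diagonal d * V)ᵀ = Vᵀ * Matrix.diagonal d * V := by
      rw [Matrix.transpose_mul, Matrix.transpose_mul, Matrix.transpose_transpose,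
        Matrix.diagonal_transpose, Matrix.mul_assoc]
    rw [Matrix.IsHermitian, conjTranspose_eq_transpose_of_trivial, this]
  · intro x hx
    have hVx : V *ᵥ x ≠ 0 := by
      intro h
      apply hx
      have : (Vᵀ * V) *ᵥ x = Vᵀ *ᵥ (V *ᵥ x) := (Matrix.mulVec_mulVec x Vᵀ V).symm
      rw [hV, Matrix.one_mulVec, h, Matrix.mulVec_zero] at this
      exact this
    have := hD.dotProduct_mulVec_pos hVx
    simp only [star_trivial] at this ⊢
    calc (0:ℝ) < (V *ᵥ x) ⬝ᵥ (Matrix.diagonal d *ᵥ (V *ᵥ x)) := this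
      _ = x ⬝ᵥ ((Vᵀ * Matrix.diagonal d * V) *ᵥ x) := by
          rw [← Matrix.mulVec_mulVec, ← Matrix.mulVec_mulVec,
            Matrix.dotProduct_mulVec x Vᵀ, Matrix.vecMul_transpose]

lemma key_diag {F k : ℕ} (hk : k ≤ F) (d : Fin F → ℝ) (hd : ∀ i, 0 < d i)
    (hdesc : Antitone d) (V : Matrix (Fin F) (Fin k) ℝ) (hV : Vᵀ * V = 1) :
    frobSq ((Matrix.diagonal d)⁻¹ - V * (Vᵀ * Matrix.diagonal d * V)⁻¹ * Vᵀ)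
      ≤ ∑ i : Fin F, (if (i : ℕ) < k then 0 else ((d i)⁻¹) ^ 2) := by
  set D : Matrix (Fin F) (Fin F) ℝ := Matrix.diagonal d with hD
  set s : Fin F → ℝ := fun i => Real.sqrt (d i) with hs
  have hs0 : ∀ i, 0 < s i := fun i => Real.sqrt_pos.mpr (hd i)
  set S : Matrix (Fin F) (Fin F) ℝ := Matrix.diagonal s with hSdef
  have hSS : S * S = D := by
    rw [hSdef, Matrix.diagonal_mul_diagonal,
      show (fun i => s i * s i) = d from funext fun i => Real.mul_self_sqrt (hd i).le, hD]
  set Si : Matrix (Fin F) (Fin F) ℝ := Matrix.diagonal (fun i => (s i)⁻¹) with hSidef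
  have hSSi : S * Si = 1 := by
    rw [hSdef, hSidef, Matrix.diagonal_mul_diagonal,
      show (fun i => s i * (s i)⁻¹) = fun _ => (1:ℝ) from
        funext fun i => mul_inv_cancel₀ (hs0 i).ne', Matrix.diagonal_one]
  have hSiS : Si * S = 1 := by
    rw [hSdef, hSidef, Matrix.diagonal_mul_diagonal,
      show (fun i => (s i)⁻¹ * s i) = fun _ => (1:ℝ) from
        funext fun i => inv_mul_cancel₀ (hs0 i).ne', Matrix.diagonal_one]
  have hSt : Sᵀ = S := Matrix.diagonal_transpose s
  have hSit : Siᵀ = Si := Matrix.diagonal_transpose _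
  set e : Fin F → ℝ := fun i => ((d i)⁻¹) ^ 2 with he
  set A : Matrix (Fin F) (Fin F) ℝ := Matrix.diagonal (fun i => (d i)⁻¹) with hA
  have hDinv : D⁻¹ = A := by
    apply Matrix.inv_eq_right_inv
    rw [hD, hA, Matrix.diagonal_mul_diagonal,
      show (fun i => d i * (d i)⁻¹) = fun _ => (1:ℝ) from
        funext fun i => mul_inv_cancel₀ (hd i).ne', Matrix.diagonal_one]
  have hAt : Aᵀ = A := Matrix.diagonal_transpose _
  have hSiSi : Si * Si = A := by
    rw [hSidef, Matrix.diagonal_mul_diagonal, hA,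
      show (fun i => (s i)⁻¹ * (s i)⁻¹) = fun i => (d i)⁻¹ from
        funext fun i => by rw [← mul_inv, Real.mul_self_sqrt (hd i).le]]
  have hAA : A * A = Matrix.diagonal e := by
    rw [hA, Matrix.diagonal_mul_diagonal, he,
      show (fun i => (d i)⁻¹ * (d i)⁻¹) = fun i => ((d i)⁻¹)^2 from
        funext fun i => (sq _).symm]
  set B : Matrix (Fin k) (Fin k) ℝ := Vᵀ * D * V with hB
  have hBpd : B.PosDef := B_posDef d hd V hV
  have hBunit : IsUnit B.det := hBpd.det_pos.ne'.isUnit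
  have hBiB : B⁻¹ * B = 1 := Matrix.nonsing_inv_mul B hBunit
  have hBBi : B * B⁻¹ = 1 := Matrix.mul_nonsing_inv B hBunit
  have hBt : Bᵀ = B := by
    rw [hB, Matrix.transpose_mul, Matrix.transpose_mul, Matrix.transpose_transpose,
      hD, Matrix.diagonal_transpose, Matrix.mul_assoc]
  have hBit : (B⁻¹)ᵀ = B⁻¹ := by rw [Matrix.transpose_nonsing_inv, hBt]
  set P : Matrix (Fin F) (Fin F) ℝ := S * V * B⁻¹ * Vᵀ * S with hP
  have hPt : Pᵀ = P := by
    rw [hP]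
    simp only [Matrix.transpose_mul, Matrix.transpose_transpose, hSt, hBit]
    simp only [Matrix.mul_assoc]
  have hmid : Vᵀ * S * (S * V) = B := by
    rw [Matrix.mul_assoc Vᵀ S, ← Matrix.mul_assoc S S, hSS, ← Matrix.mul_assoc, hB]
  have hPP : P * P = P := by
    calc P * P = S * V * B⁻¹ * (Vᵀ * S * (S * V)) * (B⁻¹ * (Vᵀ * S)) := by
          rw [hP]; simp only [Matrix.mul_assoc]
      _ = S * V * B⁻¹ * B * (B⁻¹ * (Vᵀ * S)) := by rw [hmid]
      _ = S * V * (B⁻¹ * B) * (B⁻¹ * (Vᵀ * S)) := by simp only [Matrix.mul_assoc]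
      _ = S * V * (B⁻¹ * (Vᵀ * S)) := by rw [hBiB, Matrix.mul_one]
      _ = P := by rw [hP]; simp only [Matrix.mul_assoc]
  have htrP : Matrix.trace P = k := by
    calc Matrix.trace P = Matrix.trace ((S * V) * (B⁻¹ * (Vᵀ * S))) := by
          rw [hP]; simp only [Matrix.mul_assoc]
      _ = Matrix.trace ((B⁻¹ * (Vᵀ * S)) * (S * V)) := Matrix.trace_mul_comm _ _
      _ = Matrix.trace (B⁻¹ * B) := by
          rw [Matrix.mul_assoc B⁻¹ (Vᵀ * S) (S * V), hmid]
      _ = k := by rw [hBiB, Matrix.trace_one]; simp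
  set Q : Matrix (Fin F) (Fin F) ℝ := 1 - P with hQ
  have hQQ : Q * Q = Q := by
    rw [hQ, Matrix.mul_sub, Matrix.sub_mul, Matrix.sub_mul, hPP, Matrix.mul_one,
      Matrix.one_mul, Matrix.mul_one]
    abel
  have hQt : Qᵀ = Q := by rw [hQ, Matrix.transpose_sub, hPt, Matrix.transpose_one]
  set M : Matrix (Fin F) (Fin F) ℝ := D⁻¹ - V * B⁻¹ * Vᵀ with hM
  have hSiPSi : Si * P * Si = V * B⁻¹ * Vᵀ := by
    calc Si * P * Si = (Si * S) * (V * (B⁻¹ * (Vᵀ * (S * Si)))) := by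
          rw [hP]; simp only [Matrix.mul_assoc]
      _ = V * B⁻¹ * Vᵀ := by
          rw [hSiS, hSSi]
          simp only [Matrix.one_mul, Matrix.mul_one, Matrix.mul_assoc]
  have hMeq : M = Si * Q * Si := by
    rw [hM, hQ, Matrix.mul_sub, Matrix.sub_mul, Matrix.mul_one, hSiSi, hSiPSi, hDinv]
  have hMt : Mᵀ = M := by
    rw [hMeq]
    simp only [Matrix.transpose_mul, hSit, hQt]
    simp only [Matrix.mul_assoc]
  have hfM : frobSq M = Matrix.trace (Q * A * Q * A) := by
    rw [frobSq_eq_trace, hMt]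
    calc Matrix.trace (M * M)
        = Matrix.trace (Si * (Q * ((Si * Si) * (Q * Si)))) := by
          rw [hMeq]; simp only [Matrix.mul_assoc]
      _ = Matrix.trace (Si * (Q * (A * (Q * Si)))) := by rw [hSiSi]
      _ = Matrix.trace ((Q * (A * (Q * Si))) * Si) := Matrix.trace_mul_comm _ _
      _ = Matrix.trace (Q * A * Q * (Si * Si)) := by simp only [Matrix.mul_assoc]
      _ = Matrix.trace (Q * A * Q * A) := by rw [hSiSi]
  have hcross : (0:ℝ) ≤ Matrix.trace (Q * A * P * (A * Q)) := by
    have h0 : 0 ≤ frobSq (P * A * Q) := frobSq_nonneg _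
    rw [frobSq_eq_trace] at h0
    have : (P * A * Q)ᵀ * (P * A * Q) = Q * A * P * (A * Q) := by
      simp only [Matrix.transpose_mul, hAt, hPt, hQt]
      simp only [Matrix.mul_assoc]
      rw [← Matrix.mul_assoc P P, hPP]
    rwa [this] at h0
  have hexpand : Matrix.trace (Q * A * P * (A * Q))
      = Matrix.trace (A * A * Q) - Matrix.trace (Q * A * Q * A) := by
    have hPQ : P = 1 - Q := by rw [hQ]; abel
    have h1 : Q * A * P * (A * Q) = Q * A * (A * Q) - Q * A * Q * (A * Q) := by
      rw [hPQ, Matrix.mul_sub, Matrix.mul_one, Matrix.sub_mul, Matrix.mul_assoc (Q * A) Q (A * Q)]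
    rw [h1, Matrix.trace_sub]
    congr 1
    · calc Matrix.trace (Q * A * (A * Q))
          = Matrix.trace (Q * (A * (A * Q))) := by simp only [Matrix.mul_assoc]
        _ = Matrix.trace ((A * (A * Q)) * Q) := Matrix.trace_mul_comm _ _
        _ = Matrix.trace (A * A * (Q * Q)) := by simp only [Matrix.mul_assoc]
        _ = Matrix.trace (A * A * Q) := by rw [hQQ]
    · calc Matrix.trace (Q * A * Q * (A * Q))
          = Matrix.trace (Q * (A * Q * (A * Q))) := by simp only [Matrix.mul_assoc]
        _ = Matrix.trace ((A * Q * (A * Q)) * Q) := Matrix.trace_mul_comm _ _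
        _ = Matrix.trace (A * (Q * (A * (Q * Q)))) := by simp only [Matrix.mul_assoc]
        _ = Matrix.trace (A * (Q * (A * Q))) := by rw [hQQ]
        _ = Matrix.trace ((Q * (A * Q)) * A) := Matrix.trace_mul_comm _ _
        _ = Matrix.trace (Q * A * Q * A) := by simp only [Matrix.mul_assoc]
  have hAAQ : Matrix.trace (A * A * Q) = Matrix.trace (A * A) - Matrix.trace (A * A * P) := by
    rw [hQ, Matrix.mul_sub, Matrix.mul_one, Matrix.trace_sub]
  have htrAA : Matrix.trace (A * A) = ∑ i, e i := by
    rw [hAA, Matrix.trace_diagonal]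
  have htrAAP : Matrix.trace (A * A * P) = ∑ i, P i i * e i := by
    rw [hAA, Matrix.trace]
    refine Finset.sum_congr rfl fun i _ => ?_
    rw [Matrix.diag_apply, Matrix.diagonal_mul, mul_comm]
  have hmono : Monotone e := by
    intro i j hij
    have h1 : d j ≤ d i := hdesc hij
    have h2 : (d i)⁻¹ ≤ (d j)⁻¹ := inv_anti₀ (hd j) h1
    have h3 : (0:ℝ) ≤ (d i)⁻¹ := (inv_pos.mpr (hd i)).le
    simp only [he]
    nlinarith
  have hpsum : ∑ i, P i i = (k:ℝ) := by
    simpa [Matrix.trace, Matrix.diag] using htrP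
  have hws := weighted_sum_ge hk (fun i => P i i) e
    (proj_diag_nonneg P hPP hPt) (proj_diag_le_one P hPP hPt) hpsum hmono
  calc frobSq M = Matrix.trace (Q * A * Q * A) := hfM
    _ ≤ Matrix.trace (A * A * Q) := by linarith [hcross, hexpand]
    _ = Matrix.trace (A * A) - Matrix.trace (A * A * P) := hAAQ
    _ ≤ (∑ i, e i) - ∑ i : Fin F, (if (i : ℕ) < k then e i else 0) := by
        rw [htrAA, htrAAP]; linarith [hws]
    _ = ∑ i : Fin F, (if (i : ℕ) < k then 0 else ((d i)⁻¹) ^ 2) := by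
        rw [← Finset.sum_sub_distrib]
        refine Finset.sum_congr rfl fun i _ => ?_
        simp only [he]
        split_ifs <;> ring


lemma sum_castLE {F k : ℕ} (hk : k ≤ F) (f : Fin F → ℝ) :
    ∑ a : Fin k, f (Fin.castLE hk a) = ∑ b : Fin F, if (b : ℕ) < k then f b else 0 := by
  rw [← Finset.sum_filter]
  have hmap : Finset.univ.map ⟨Fin.castLE hk, (Fin.strictMono_castLE hk).injective⟩
      = Finset.univ.filter (fun b : Fin F => (b : ℕ) < k) := by
    ext b
    simp only [Finset.mem_map, Finset.mem_univ, true_and, Finset.mem_filter,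
      Function.Embedding.coeFn_mk]
    constructor
    · rintro ⟨a, rfl⟩
      exact a.2
    · intro hb
      exact ⟨⟨(b : ℕ), hb⟩, rfl⟩
  rw [← hmap, Finset.sum_map]
  rfl

lemma frobSq_diagonal {n : Type*} [Fintype n] [DecidableEq n] (f : n → ℝ) :
    frobSq (Matrix.diagonal f) = ∑ i, f i ^ 2 := by
  unfold frobSq
  refine Finset.sum_congr rfl fun i _ => ?_
  calc ∑ j, (Matrix.diagonal f i j) ^ 2 = ∑ j, if i = j then f i ^ 2 else 0 := by
        refine Finset.sum_congr rfl fun j _ => ?_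
        rw [Matrix.diagonal_apply]
        split_ifs with h
        · subst h; rfl
        · ring
    _ = f i ^ 2 := by simp


theorem stmt11 {F k : ℕ} (hk : k ≤ F)
    (C U : Matrix (Fin F) (Fin F) ℝ) (d : Fin F → ℝ)
    (hC : C.PosDef) (hU : U * Uᵀ = 1) (hU' : Uᵀ * U = 1)
    (hd : ∀ i, 0 < d i) (hdesc : Antitone d)
    (hdecomp : C = U * Matrix.diagonal d * Uᵀ)
    (W : Matrix (Fin F) (Fin k) ℝ) (hW : Wᵀ * W = 1) :
    frobSq (C⁻¹ - W * (Wᵀ * C * W)⁻¹ * Wᵀ)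
      ≤ frobSq (C⁻¹ - U.submatrix id (Fin.castLE hk)
          * (Matrix.diagonal (d ∘ Fin.castLE hk))⁻¹
          * (U.submatrix id (Fin.castLE hk))ᵀ) := by
  classical
  set D : Matrix (Fin F) (Fin F) ℝ := Matrix.diagonal d with hDdef
  have hDinv : D⁻¹ = Matrix.diagonal (fun i => (d i)⁻¹) := by
    apply Matrix.inv_eq_right_inv
    rw [hDdef, Matrix.diagonal_mul_diagonal,
      show (fun i => d i * (d i)⁻¹) = fun _ => (1:ℝ) from
        funext fun i => mul_inv_cancel₀ (hd i).ne', Matrix.diagonal_one]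
  have hDDi : D * D⁻¹ = 1 := by
    rw [hDinv, hDdef, Matrix.diagonal_mul_diagonal,
      show (fun i => d i * (d i)⁻¹) = fun _ => (1:ℝ) from
        funext fun i => mul_inv_cancel₀ (hd i).ne', Matrix.diagonal_one]
  have hCinv : C⁻¹ = U * D⁻¹ * Uᵀ := by
    apply Matrix.inv_eq_right_inv
    rw [hdecomp]
    calc U * D * Uᵀ * (U * D⁻¹ * Uᵀ)
        = U * (D * ((Uᵀ * U) * (D⁻¹ * Uᵀ))) := by simp only [Matrix.mul_assoc]
      _ = U * ((D * D⁻¹) * Uᵀ) := by rw [hU']; simp only [Matrix.one_mul, Matrix.mul_assoc]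
      _ = 1 := by rw [hDDi, Matrix.one_mul, hU]
  set V : Matrix (Fin F) (Fin k) ℝ := Uᵀ * W with hVdef
  have hVt : Vᵀ = Wᵀ * U := by
    rw [hVdef, Matrix.transpose_mul, Matrix.transpose_transpose]
  have hV : Vᵀ * V = 1 := by
    rw [hVt, hVdef, Matrix.mul_assoc, ← Matrix.mul_assoc U Uᵀ W, hU, Matrix.one_mul, hW]
  have hUV : U * V = W := by rw [hVdef, ← Matrix.mul_assoc, hU, Matrix.one_mul]
  have hWCW : Wᵀ * C * W = Vᵀ * D * V := by
    rw [hdecomp, hVt, hVdef]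
    simp only [Matrix.mul_assoc]
  have hLHS : C⁻¹ - W * (Wᵀ * C * W)⁻¹ * Wᵀ
      = U * (D⁻¹ - V * (Vᵀ * D * V)⁻¹ * Vᵀ) * Uᵀ := by
    rw [hWCW, hCinv, Matrix.mul_sub, Matrix.sub_mul]
    congr 1
    refine Eq.symm ?_
    calc U * (V * (Vᵀ * D * V)⁻¹ * Vᵀ) * Uᵀ
        = (U * V) * (Vᵀ * D * V)⁻¹ * (Vᵀ * Uᵀ) := by simp only [Matrix.mul_assoc]
      _ = W * (Vᵀ * D * V)⁻¹ * Wᵀ := by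
          rw [← Matrix.transpose_mul, hUV]
  -- right-hand side
  set g : Fin F → ℝ := fun i => if (i : ℕ) < k then (d i)⁻¹ else 0 with hg
  have hGinv : (Matrix.diagonal (d ∘ Fin.castLE hk))⁻¹
      = Matrix.diagonal (fun a : Fin k => (d (Fin.castLE hk a))⁻¹) := by
    apply Matrix.inv_eq_right_inv
    rw [Matrix.diagonal_mul_diagonal,
      show (fun a : Fin k => (d ∘ Fin.castLE hk) a * (d (Fin.castLE hk a))⁻¹)
          = fun _ => (1:ℝ) from
        funext fun a => mul_inv_cancel₀ (hd _).ne', Matrix.diagonal_one]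
  have hRHSm : U.submatrix id (Fin.castLE hk)
      * (Matrix.diagonal (d ∘ Fin.castLE hk))⁻¹
      * (U.submatrix id (Fin.castLE hk))ᵀ = U * Matrix.diagonal g * Uᵀ := by
    rw [hGinv]
    ext i j
    rw [Matrix.mul_apply, Matrix.mul_apply]
    have hL : ∀ a : Fin k,
        (U.submatrix id (Fin.castLE hk) * Matrix.diagonal fun a => (d (Fin.castLE hk a))⁻¹) i a
          * (U.submatrix id (Fin.castLE hk))ᵀ a j
        = U i (Fin.castLE hk a) * (d (Fin.castLE hk a))⁻¹ * U j (Fin.castLE hk a) := by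
      intro a
      rw [Matrix.mul_diagonal, Matrix.transpose_apply, Matrix.submatrix_apply,
        Matrix.submatrix_apply]
      rfl
    have hR : ∀ b : Fin F, (U * Matrix.diagonal g) i b * Uᵀ b j
        = (if (b : ℕ) < k then U i b * (d b)⁻¹ * U j b else 0) := by
      intro b
      rw [Matrix.mul_diagonal, Matrix.transpose_apply]
      simp only [hg]
      by_cases hb : (b : ℕ) < k
      · simp only [if_pos hb]
      · simp only [if_neg hb]; ring
    rw [Finset.sum_congr rfl fun a _ => hL a, Finset.sum_congr rfl fun b _ => hR b]
    exact sum_castLE hk (fun b => U i b * (d b)⁻¹ * U j b)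
  have hRHS : C⁻¹ - U.submatrix id (Fin.castLE hk)
      * (Matrix.diagonal (d ∘ Fin.castLE hk))⁻¹
      * (U.submatrix id (Fin.castLE hk))ᵀ
      = U * (Matrix.diagonal fun i : Fin F => if (i : ℕ) < k then 0 else (d i)⁻¹) * Uᵀ := by
    rw [hRHSm, hCinv, ← Matrix.sub_mul, ← Matrix.mul_sub, hDinv, Matrix.diagonal_sub]
    refine congrArg (fun X => U * X * Uᵀ) ?_
    refine congrArg Matrix.diagonal ?_
    funext i
    by_cases hb : (i : ℕ) < k <;> simp [hg, hb]
  rw [hLHS, hRHS, frobSq_conj U _ hU hU', frobSq_conj U _ hU hU', frobSq_diagonal]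
  calc frobSq (D⁻¹ - V * (Vᵀ * D * V)⁻¹ * Vᵀ)
      ≤ ∑ i : Fin F, (if (i : ℕ) < k then 0 else ((d i)⁻¹) ^ 2) := by
        rw [hDdef]
        exact key_diag hk d hd hdesc V hV
    _ = ∑ i : Fin F, (if (i : ℕ) < k then 0 else (d i)⁻¹) ^ 2 := by
        refine Finset.sum_congr rfl fun i _ => ?_
        split_ifs <;> ring
end

section
/- Let C ∈ R^{F×F} be symmetric positive definite, W ∈ R^{F×k} with orthonormal columns. Then tr((Wᵀ C W)⁻²) ≤ tr(Wᵀ C⁻¹ W (Wᵀ C W)⁻¹). -/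
open Matrix

lemma trace_nonneg_of_posSemidef {n : ℕ} {A : Matrix (Fin n) (Fin n) ℝ}
    (hA : A.PosSemidef) : 0 ≤ A.trace := by
  rw [Matrix.trace]
  refine Finset.sum_nonneg fun i _ => ?_
  exact hA.diag_nonneg

theorem stmt12 {F k : ℕ} (C : Matrix (Fin F) (Fin F) ℝ) (hC : C.PosDef)
    (W : Matrix (Fin F) (Fin k) ℝ) (hW : Wᵀ * W = 1) :
    ((Wᵀ * C * W)⁻¹ * (Wᵀ * C * W)⁻¹).trace
      ≤ (Wᵀ * C⁻¹ * W * (Wᵀ * C * W)⁻¹).trace := by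
  classical
  set S := (open scoped MatrixOrder in CFC.sqrt C) with hSdef
  have hS2 : S * S = C := (open scoped MatrixOrder in CFC.sqrt_mul_sqrt_self C hC.posSemidef.nonneg)
  have hSsym : Sᵀ = S := by
    have h := (open scoped MatrixOrder in (CFC.sqrt_nonneg C).posSemidef.1)
    simpa [Matrix.IsHermitian, Matrix.conjTranspose_eq_transpose_of_trivial] using h
  have hSdet : IsUnit S.det := by
    have hCd : (0:ℝ) < C.det := hC.det_pos
    rw [← hS2, det_mul] at hCd
    have : S.det ≠ 0 := by
      intro h; rw [h] at hCd; simp at hCd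
    exact isUnit_iff_ne_zero.mpr this
  have hSS : S⁻¹ * S = 1 := nonsing_inv_mul S hSdet
  have hSS' : S * S⁻¹ = 1 := mul_nonsing_inv S hSdet
  have hCinv : C⁻¹ = S⁻¹ * S⁻¹ := by rw [← hS2, Matrix.mul_inv_rev]
  set M := Wᵀ * C * W with hMdef
  -- M is positive definite
  have hM : M.PosDef := by
    refine Matrix.PosDef.of_dotProduct_mulVec_pos ?_ ?_
    · have hCt : Cᵀ = C := by
        have h := hC.1
        simpa [Matrix.IsHermitian, Matrix.conjTranspose_eq_transpose_of_trivial] using h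
      show Mᴴ = M
      have : Mᴴ = Mᵀ := by ext i j; simp [Matrix.conjTranspose, Matrix.transpose]
      rw [this, hMdef, Matrix.transpose_mul, Matrix.transpose_mul, Matrix.transpose_transpose,
        hCt, Matrix.mul_assoc]
    · intro x hx
      have hWx : W *ᵥ x ≠ 0 := by
        intro h
        have : Wᵀ *ᵥ (W *ᵥ x) = x := by
          rw [Matrix.mulVec_mulVec, hW, Matrix.one_mulVec]
        rw [h, Matrix.mulVec_zero] at this
        exact hx this.symm
      have := hC.dotProduct_mulVec_pos hWx
      have hrw : dotProduct (star x) (M *ᵥ x)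
          = dotProduct (star (W *ᵥ x)) (C *ᵥ (W *ᵥ x)) := by
        simp only [star_trivial]
        rw [hMdef, ← Matrix.mulVec_mulVec, ← Matrix.mulVec_mulVec,
          Matrix.dotProduct_mulVec, Matrix.vecMul_transpose]
      rw [hrw]
      exact this
  have hMinv : M⁻¹.PosDef := hM.inv
  have hMM : M⁻¹ * M = 1 := nonsing_inv_mul M (isUnit_iff_ne_zero.mpr hM.det_pos.ne')
  have hMM' : M * M⁻¹ = 1 := mul_nonsing_inv M (isUnit_iff_ne_zero.mpr hM.det_pos.ne')
  have hMinvSym : M⁻¹ᵀ = M⁻¹ := by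
    rw [Matrix.transpose_nonsing_inv]
    congr 1
    have h := hM.1
    have : Mᴴ = Mᵀ := by ext i j; simp [Matrix.conjTranspose, Matrix.transpose]
    rw [← this, h]
  set R := S⁻¹ * W - S * W * M⁻¹ with hRdef
  have hSinvT : S⁻¹ᵀ = S⁻¹ := by rw [Matrix.transpose_nonsing_inv, hSsym]
  have key : Rᵀ * R = Wᵀ * C⁻¹ * W - M⁻¹ := by
    rw [hRdef, Matrix.transpose_sub, Matrix.transpose_mul, Matrix.transpose_mul,
      Matrix.transpose_mul, hSinvT, hSsym, hMinvSym]
    rw [Matrix.sub_mul, Matrix.mul_sub, Matrix.mul_sub]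
    have e1 : Wᵀ * S⁻¹ * (S⁻¹ * W) = Wᵀ * C⁻¹ * W := by
      rw [hCinv]; simp only [Matrix.mul_assoc]
    have e2 : Wᵀ * S⁻¹ * (S * W * M⁻¹) = M⁻¹ := by
      calc Wᵀ * S⁻¹ * (S * W * M⁻¹) = Wᵀ * (S⁻¹ * S) * W * M⁻¹ := by
            simp only [Matrix.mul_assoc]
        _ = M⁻¹ := by rw [hSS, Matrix.mul_one, hW, Matrix.one_mul]
    have e3 : M⁻¹ * (Wᵀ * S) * (S⁻¹ * W) = M⁻¹ := by
      calc M⁻¹ * (Wᵀ * S) * (S⁻¹ * W) = M⁻¹ * (Wᵀ * (S * S⁻¹) * W) := by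
            simp only [Matrix.mul_assoc]
        _ = M⁻¹ := by rw [hSS', Matrix.mul_one, hW, Matrix.mul_one]
    have e4 : M⁻¹ * (Wᵀ * S) * (S * W * M⁻¹) = M⁻¹ := by
      calc M⁻¹ * (Wᵀ * S) * (S * W * M⁻¹) = M⁻¹ * (Wᵀ * (S * S) * W) * M⁻¹ := by
            simp only [Matrix.mul_assoc]
        _ = M⁻¹ * M * M⁻¹ := by rw [hS2]
        _ = M⁻¹ := by rw [hMM, Matrix.one_mul]
    rw [e1, e2, e3, e4]
    abel
  -- trace inequality
  have hDM : 0 ≤ ((Wᵀ * C⁻¹ * W - M⁻¹) * M⁻¹).trace := by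
    rw [← key, Matrix.mul_assoc, Matrix.trace_mul_comm]
    refine trace_nonneg_of_posSemidef ?_
    have h := hMinv.posSemidef.mul_mul_conjTranspose_same R
    have hRT : Rᴴ = Rᵀ := by ext i j; simp [Matrix.conjTranspose, Matrix.transpose]
    rw [hRT] at h
    convert h using 1
  have expand : (Wᵀ * C⁻¹ * W - M⁻¹) * M⁻¹
      = Wᵀ * C⁻¹ * W * M⁻¹ - M⁻¹ * M⁻¹ := by rw [Matrix.sub_mul]
  rw [expand, Matrix.trace_sub, sub_nonneg] at hDM
  exact hDM
end
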